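/- In the set-cover reduction graph G, any (λ,k)-FT-BFP H of G yields a set cover of the instance (U,𝔉) of size at most (1/λ)·min_j |in(v_j, H)|: choosing j minimizing the in-degree of v_j and defining S_i = {W ∈ 𝔉 : (y_{i,W}, v_j) ∈ E(H)} for i = 1,…,λ, the smallest of the sets S_1,…,S_λ is a valid set cover of U of size at most min_j |in(v_j,H)| / λ. -/

import Mathlib

/-!
Failing the `u + 1` edges that separate the leaf `x_i` from the sibling subtrees along its root
path and from `r(x_i)` still leaves `λ` edge-disjoint paths from `s` to `v_{j₀}` in `G`, one
through each tree, the one through tree `i` running via `ℓ(x_i)` and some `y_{i,W}` with `x ∈ W`.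
As `s` has out-degree `λ`, an FT-BFP `H` keeps `λ` disjoint paths after these failures, and one
of them starts at the root of tree `i`. The only edges leaving the part of tree `i` it can still
use are the edges `y_{i,W} → v_{j₀}` with `x ∈ W`, so every `S_i` covers `U`. The `S_i` index
disjoint sets of in-edges of `v_{j₀}`, hence the smallest has at most `|in(v_{j₀}, H)| / λ`
elements.
-/

open Finset

/-- `p` is a nonempty directed path/walk (as a list of edges) from `s` to `t`
using only edges of `G`. -/
def IsPath {V : Type*} (G : Finset (V × V)) (s t : V) (p : List (V × V)) : Prop :=
  p ≠ [] ∧ (∀ e ∈ p, e ∈ G) ∧ List.Chain' (fun e f => e.2 = f.1) p ∧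
    p.head?.map Prod.fst = some s ∧ p.getLast?.map Prod.snd = some t

/-- `G` contains `r` pairwise edge-disjoint paths from `s` to `t` (unit capacities). -/
def EDP {V : Type*} (G : Finset (V × V)) (s t : V) (r : ℕ) : Prop :=
  ∃ ps : Fin r → List (V × V), (∀ i, IsPath G s t (ps i)) ∧
    ∀ i j, i ≠ j → ∀ e, e ∈ ps i → e ∉ ps j

/-- Max-flow with unit capacities: the maximum number of edge-disjoint `s`-`t` paths. -/
noncomputable def maxFlow {V : Type*} (G : Finset (V × V)) (s t : V) : ℕ :=
  sSup {r | EDP G s t r}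

/-- Directed reachability in the edge set `G`. -/
def Reach {V : Type*} (G : Finset (V × V)) (s t : V) : Prop :=
  Relation.ReflTransGen (fun a b => (a, b) ∈ G) s t

def inEdges {V : Type*} [DecidableEq V] (G : Finset (V × V)) (v : V) : Finset (V × V) :=
  G.filter fun e => e.2 = v

def outDeg {V : Type*} [DecidableEq V] (G : Finset (V × V)) (v : V) : ℕ :=
  (G.filter fun e => e.1 = v).card

/-- `H` is a `(lam, k)` fault-tolerant bounded-flow-preserver of `G` w.r.t. source `s`:
for every set `F` of at most `k` failed edges and every vertex `t`, the `s`-`t` max-flow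
of `H \ F` equals that of `G \ F` whenever the latter is at most `lam`, and is at least
`lam` otherwise. -/
def IsFTBFP {V : Type*} [DecidableEq V] (G H : Finset (V × V)) (s : V) (lam k : ℕ) : Prop :=
  H ⊆ G ∧ ∀ F : Finset (V × V), F.card ≤ k → ∀ t : V,
    (maxFlow (G \ F) s t ≤ lam → maxFlow (H \ F) s t = maxFlow (G \ F) s t) ∧
    (lam < maxFlow (G \ F) s t → lam ≤ maxFlow (H \ F) s t)

/-- `H` is a `j`-fault-tolerant reachability subgraph of `G` w.r.t. source `s`. -/
def IsFTRS {V : Type*} [DecidableEq V] (G H : Finset (V × V)) (s : V) (j : ℕ) : Prop :=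
  H ⊆ G ∧ ∀ F : Finset (V × V), F.card ≤ j → ∀ t : V,
    (Reach (H \ F) s t ↔ Reach (G \ F) s t)

def IsCut {V : Type*} (A : Finset V) (s t : V) : Prop := s ∈ A ∧ t ∉ A

/-- Number of edges of `G` from `A` to its complement. -/
def cutVal {V : Type*} [DecidableEq V] (G : Finset (V × V)) (A : Finset V) : ℕ :=
  (G.filter fun e => e.1 ∈ A ∧ e.2 ∉ A).card

def IsMinCut {V : Type*} [DecidableEq V] (G : Finset (V × V)) (s t : V) (A : Finset V) : Prop :=
  IsCut A s t ∧ ∀ B : Finset V, IsCut B s t → cutVal G A ≤ cutVal G B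

def IsCutS {V : Type*} (S : Finset V) (t : V) (A : Finset V) : Prop := S ⊆ A ∧ t ∉ A

def IsMinCutS {V : Type*} [DecidableEq V] (G : Finset (V × V)) (S : Finset V) (t : V)
    (A : Finset V) : Prop :=
  IsCutS S t A ∧ ∀ B : Finset V, IsCutS S t B → cutVal G A ≤ cutVal G B

/-- Farthest min-cut: the min-cut whose source side contains the source side of
every min-cut. -/
def IsFMC {V : Type*} [DecidableEq V] (G : Finset (V × V)) (S : Finset V) (t : V)
    (A : Finset V) : Prop :=
  IsMinCutS G S t A ∧ ∀ B : Finset V, IsMinCutS G S t B → B ⊆ A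

/-- Vertices outside `A` with an in-edge from `A`. -/
def outSet {V : Type*} [DecidableEq V] (G : Finset (V × V)) (A : Finset V) : Finset V :=
  (G.filter fun e => e.1 ∈ A ∧ e.2 ∉ A).image Prod.snd

open scoped Classical

/-- Vertices of the set-cover reduction graph: the source `s`; the nodes of `lam`
disjoint complete binary trees of height `u` (heap-indexed, leaves correspond to the
elements of `U`); the vertices `ℓ(x_i)` (`false`) and `r(x_i)` (`true`); the set
vertices `y_{i,W}` (`W` indexed by `ι`); the `u+1` vertices of each `Z_i`; and the
`N` sink vertices `v_1, …, v_N`. -/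
abbrev SCV (lam u N : ℕ) (U ι : Type*) :=
  Unit ⊕ (Fin lam × Fin (2 ^ (u + 1) - 1)) ⊕ (Fin lam × U × Bool) ⊕ (Fin lam × ι) ⊕
    (Fin lam × Fin (u + 1)) ⊕ Fin N

variable {lam u N : ℕ} {U ι : Type*}

def yV (i : Fin lam) (w : ι) : SCV lam u N U ι :=
  Sum.inr (Sum.inr (Sum.inr (Sum.inl (i, w))))

def zV (i : Fin lam) (c : Fin (u + 1)) : SCV lam u N U ι :=
  Sum.inr (Sum.inr (Sum.inr (Sum.inr (Sum.inl (i, c)))))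

def sinkV (j : Fin N) : SCV lam u N U ι :=
  Sum.inr (Sum.inr (Sum.inr (Sum.inr (Sum.inr j))))

/-- Edges of the set-cover reduction graph (sets `Sw : ι → Finset U`, the bijection
`elem` identifies the `2^u` heap leaves with the elements of `U`): `s → r_i`; the
tree edges; each leaf `x_i` to `ℓ(x_i)` and `r(x_i)`; `ℓ(x_i) → y_{i,W}` iff
`x ∈ W`; `r(x_i) → Z_i` (all of it); and every vertex of `Y_i ∪ Z_i` to every
sink `v_j`. -/
def scEdge (lam u N : ℕ) (U ι : Type*) (Sw : ι → Finset U) (elem : Fin (2 ^ u) ≃ U) :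
    SCV lam u N U ι × SCV lam u N U ι → Prop := fun e =>
  match e with
  | (Sum.inl _, Sum.inr (Sum.inl (_, a))) => (a : ℕ) = 0
  | (Sum.inr (Sum.inl (i, a)), Sum.inr (Sum.inl (i2, b))) =>
      i = i2 ∧ ((b : ℕ) = 2 * (a : ℕ) + 1 ∨ (b : ℕ) = 2 * (a : ℕ) + 2)
  | (Sum.inr (Sum.inl (i, a)), Sum.inr (Sum.inr (Sum.inl (i2, x, _)))) =>
      i = i2 ∧ ∃ j : Fin (2 ^ u), (a : ℕ) = 2 ^ u - 1 + (j : ℕ) ∧ elem j = x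
  | (Sum.inr (Sum.inr (Sum.inl (i, x, false))), Sum.inr (Sum.inr (Sum.inr (Sum.inl (i2, w))))) =>
      i = i2 ∧ x ∈ Sw w
  | (Sum.inr (Sum.inr (Sum.inl (i, _, true))), Sum.inr (Sum.inr (Sum.inr (Sum.inr (Sum.inl (i2, _)))))) =>
      i = i2
  | (Sum.inr (Sum.inr (Sum.inr (Sum.inl _))), Sum.inr (Sum.inr (Sum.inr (Sum.inr (Sum.inr _))))) =>
      True
  | (Sum.inr (Sum.inr (Sum.inr (Sum.inr (Sum.inl _)))), Sum.inr (Sum.inr (Sum.inr (Sum.inr (Sum.inr _))))) =>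
      True
  | _ => False

noncomputable def scGraph (lam u N : ℕ) (U ι : Type*) [Fintype U] [Fintype ι]
    (Sw : ι → Finset U) (elem : Fin (2 ^ u) ≃ U) :
    Finset (SCV lam u N U ι × SCV lam u N U ι) :=
  Finset.univ.filter (scEdge lam u N U ι Sw elem)

section FlowPaths

variable {V : Type*} {G : Finset (V × V)} {s t : V}

lemma IsPath.exists_eq_cons {p : List (V × V)} (hp : IsPath G s t p) :
    ∃ e rest, p = e :: rest ∧ e ∈ G ∧ e.1 = s := by
  obtain ⟨hne, hmem, -, hhead, -⟩ := hp
  obtain ⟨e, rest, rfl⟩ := List.exists_cons_of_ne_nil hne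
  exact ⟨e, rest, rfl, hmem e List.mem_cons_self, by simpa using hhead⟩

lemma IsPath.reach_snd {e : V × V} {rest : List (V × V)} (hp : IsPath G s t (e :: rest)) :
    Reach G e.2 t := by
  induction rest generalizing s e with
  | nil =>
    obtain ⟨-, -, -, -, hlast⟩ := hp
    simp only [List.getLast?_singleton, Option.map_some, Option.some.injEq] at hlast
    exact hlast ▸ Relation.ReflTransGen.refl
  | cons e' rest ih =>
    obtain ⟨-, hmem, hchain, -, hlast⟩ := hp
    obtain ⟨hee', hchain'⟩ := List.isChain_cons_cons.mp hchain
    have hp' : IsPath G e'.1 t (e' :: rest) :=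
      ⟨List.cons_ne_nil _ _, fun f hf => hmem f (List.mem_cons_of_mem _ hf), hchain', rfl,
        by rwa [List.getLast?_cons_cons] at hlast⟩
    rw [hee']
    exact Relation.ReflTransGen.head (hmem e' (by simp)) (ih hp')

lemma Reach.exists_mem_cut {a b : V} {A : Set V} (h : Reach G a b) (ha : a ∈ A) (hb : b ∉ A) :
    ∃ e ∈ G, e.1 ∈ A ∧ e.2 ∉ A := by
  induction h with
  | refl => exact absurd ha hb
  | @tail c d _ hcd ih =>
    by_cases hc : c ∈ A
    · exact ⟨(c, d), hcd, hc, hb⟩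
    · exact ih hc

lemma edp_zero : EDP G s t 0 :=
  ⟨Fin.elim0, fun i => i.elim0, fun i => i.elim0⟩

lemma EDP.mono {r r' : ℕ} (h : EDP G s t r) (hle : r' ≤ r) : EDP G s t r' := by
  obtain ⟨ps, hpath, hdisj⟩ := h
  exact ⟨ps ∘ Fin.castLE hle, fun i => hpath _, fun i j hij =>
    hdisj _ _ fun h => hij (Fin.castLE_injective hle h)⟩

lemma EDP.exists_injective_head {r : ℕ} (h : EDP G s t r) :
    ∃ head : Fin r → V × V, Function.Injective head ∧
      ∀ i, head i ∈ G ∧ (head i).1 = s ∧ ∃ rest, IsPath G s t (head i :: rest) := by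
  obtain ⟨ps, hpath, hdisj⟩ := h
  choose head rest hps hhead using fun i => (hpath i).exists_eq_cons
  refine ⟨head, fun i j hij => ?_, fun i => ⟨(hhead i).1, (hhead i).2, rest i, hps i ▸ hpath i⟩⟩
  by_contra hne
  exact hdisj i j hne (head i) (by simp [hps i]) (by simp [hps j, hij])

lemma EDP.le_outDeg [DecidableEq V] {r : ℕ} (h : EDP G s t r) : r ≤ outDeg G s := by
  obtain ⟨head, hinj, hhead⟩ := h.exists_injective_head
  simpa [outDeg] using card_le_card_of_injOn head (s := univ) (t := G.filter fun e => e.1 = s)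
    (fun i _ => mem_filter.mpr ⟨(hhead i).1, (hhead i).2.1⟩) hinj.injOn

/-- The first edges of the `r` disjoint paths are distinct, so they exhaust the at most `r` edges
of `G'` out of `s`. -/
lemma EDP.exists_isPath_cons [DecidableEq V] {G' : Finset (V × V)} {r : ℕ} (h : EDP G s t r)
    (hGG' : G ⊆ G') (hr : outDeg G' s ≤ r) {e : V × V} (he : e ∈ G') (hes : e.1 = s) :
    ∃ rest, IsPath G s t (e :: rest) := by
  obtain ⟨head, hinj, hhead⟩ := h.exists_injective_head
  obtain ⟨i, -, rfl⟩ := surjOn_of_injOn_of_card_le head (s := univ)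
    (t := G'.filter fun e => e.1 = s)
    (fun i _ => mem_filter.mpr ⟨hGG' (hhead i).1, (hhead i).2.1⟩) hinj.injOn
    (by simpa [outDeg] using hr) (mem_filter.mpr ⟨he, hes⟩)
  exact (hhead i).2.2

lemma bddAbove_setOf_edp : BddAbove {r | EDP G s t r} := by
  classical
  exact ⟨outDeg G s, fun _ h => h.le_outDeg⟩

lemma edp_maxFlow : EDP G s t (maxFlow G s t) :=
  Nat.sSup_mem ⟨0, edp_zero⟩ bddAbove_setOf_edp

lemma EDP.le_maxFlow {r : ℕ} (h : EDP G s t r) : r ≤ maxFlow G s t :=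
  le_csSup bddAbove_setOf_edp h

lemma IsFTBFP.edp_sdiff [DecidableEq V] {H F : Finset (V × V)} {lam k : ℕ}
    (hH : IsFTBFP G H s lam k) (hF : F.card ≤ k) (h : EDP (G \ F) s t lam) :
    EDP (H \ F) s t lam := by
  obtain ⟨hpres, hbig⟩ := hH.2 F hF t
  refine edp_maxFlow.mono ?_
  rcases le_or_gt (maxFlow (G \ F) s t) lam with hle | hlt
  · exact (hpres hle).symm ▸ h.le_maxFlow
  · exact hbig hlt

end FlowPaths

section WalkOf

variable {V : Type*} {G : Finset (V × V)}

def walkOf (f : ℕ → V) (n : ℕ) : List (V × V) :=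
  (List.range n).map fun t => (f t, f (t + 1))

lemma mem_walkOf {f : ℕ → V} {n : ℕ} {e : V × V} :
    e ∈ walkOf f n ↔ ∃ t < n, (f t, f (t + 1)) = e := by
  simp [walkOf]

lemma isPath_walkOf {f : ℕ → V} {n : ℕ} (hn : 0 < n) (h : ∀ t < n, (f t, f (t + 1)) ∈ G) :
    IsPath G (f 0) (f n) (walkOf f n) := by
  obtain ⟨n, rfl⟩ := Nat.exists_eq_add_of_lt hn
  refine ⟨by simp [walkOf], fun e he => ?_, ?_, by simp [walkOf, List.range_succ_eq_map], ?_⟩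
  · obtain ⟨t, ht, rfl⟩ := mem_walkOf.mp he
    exact h t ht
  · show List.IsChain _ _
    rw [walkOf, List.isChain_map, List.isChain_range_succ]
    exact fun _ _ => rfl
  · simp [walkOf, List.range_succ]

end WalkOf

section HeapIndex

/-- Heap numbering of a complete binary tree (root `0`, children of `n` are `2n+1`, `2n+2`,
leaf `j` of a tree of height `u` is `2^u - 1 + j`): the ancestor of leaf `j` at depth `d`. -/
def heapAnc (u j d : ℕ) : ℕ := 2 ^ d - 1 + j / 2 ^ (u - d)

/-- The child of `heapAnc u j d` not on the way to leaf `j` (the two children sum to `4a + 3`). -/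
def heapSib (u j d : ℕ) : ℕ := 4 * heapAnc u j d + 3 - heapAnc u j (d + 1)

variable {u j d : ℕ}

lemma heapAnc_zero (hj : j < 2 ^ u) : heapAnc u j 0 = 0 := by
  simp [heapAnc, Nat.div_eq_of_lt hj]

lemma heapAnc_self : heapAnc u j u = 2 ^ u - 1 + j := by
  simp [heapAnc]

lemma two_pow_sub_one_le_heapAnc : 2 ^ d - 1 ≤ heapAnc u j d := Nat.le_add_right _ _

lemma heapAnc_lt (hd : d ≤ u) (hj : j < 2 ^ u) : heapAnc u j d < 2 ^ (d + 1) - 1 := by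
  have hdiv : j / 2 ^ (u - d) < 2 ^ d := by
    apply Nat.div_lt_of_lt_mul
    rwa [← pow_add, Nat.sub_add_cancel hd]
  have := Nat.one_le_two_pow (n := d)
  simp only [heapAnc, pow_succ]
  omega

lemma heapAnc_lt_tree_size (hd : d ≤ u) (hj : j < 2 ^ u) : heapAnc u j d < 2 ^ (u + 1) - 1 := by
  have := heapAnc_lt hd hj
  have := Nat.pow_le_pow_right two_pos (Nat.succ_le_succ hd)
  omega

lemma heapAnc_injOn (hj : j < 2 ^ u) : Set.InjOn (heapAnc u j) (Set.Iic u) := by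
  intro d hd d' hd' h
  by_contra hne
  wlog hlt : d < d' generalizing d d'
  · exact this hd' hd h.symm (Ne.symm hne) (by omega)
  have := heapAnc_lt hd hj
  have := two_pow_sub_one_le_heapAnc (u := u) (j := j) (d := d')
  have := Nat.pow_le_pow_right two_pos (Nat.succ_le_of_lt hlt)
  omega

lemma heapAnc_eq_leaf_iff (hd : d ≤ u) (hj : j < 2 ^ u) {j' : ℕ} :
    heapAnc u j d = 2 ^ u - 1 + j' ↔ d = u ∧ j' = j := by
  constructor
  · intro h
    obtain rfl : u = d := by
      refine le_antisymm (not_lt.mp fun hdu => ?_) hd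
      have := heapAnc_lt hdu.le hj
      have := Nat.pow_le_pow_right two_pos hdu
      omega
    rw [heapAnc_self] at h
    omega
  · rintro ⟨rfl, rfl⟩
    exact heapAnc_self

lemma heapAnc_succ (hd : d < u) :
    heapAnc u j (d + 1) = 2 * heapAnc u j d + 1 ∨ heapAnc u j (d + 1) = 2 * heapAnc u j d + 2 := by
  have hsplit : j / 2 ^ (u - d) = j / 2 ^ (u - (d + 1)) / 2 := by
    rw [Nat.div_div_eq_div_mul, ← pow_succ]
    congr 2
    omega
  have := Nat.div_add_mod (j / 2 ^ (u - (d + 1))) 2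
  have := Nat.mod_lt (j / 2 ^ (u - (d + 1))) two_pos
  have := Nat.one_le_two_pow (n := d)
  simp only [heapAnc, pow_succ, hsplit]
  omega

lemma heapSib_lt_tree_size (hd : d < u) (hj : j < 2 ^ u) : heapSib u j d < 2 ^ (u + 1) - 1 := by
  have := heapAnc_lt hd.le hj
  have := heapAnc_succ (j := j) hd
  have : 2 ^ (d + 2) ≤ 2 ^ (u + 1) := Nat.pow_le_pow_right two_pos (by omega)
  simp only [heapSib, pow_succ] at *
  omega

lemma heapAnc_succ_ne_heapSib (hd : d < u) : heapAnc u j (d + 1) ≠ heapSib u j d := by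
  have := heapAnc_succ (j := j) hd
  unfold heapSib
  omega

lemma eq_heapAnc_succ_or_heapSib (hd : d < u) {b : ℕ}
    (hb : b = 2 * heapAnc u j d + 1 ∨ b = 2 * heapAnc u j d + 2) :
    b = heapAnc u j (d + 1) ∨ b = heapSib u j d := by
  have := heapAnc_succ (j := j) hd
  unfold heapSib
  omega

end HeapIndex

namespace SetCover

variable {elem : Fin (2 ^ u) ≃ U}

abbrev sourceV : SCV lam u N U ι := Sum.inl ()

abbrev treeV (i : Fin lam) (a : Fin (2 ^ (u + 1) - 1)) : SCV lam u N U ι :=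
  Sum.inr (Sum.inl (i, a))

abbrev elemV (i : Fin lam) (x : U) (b : Bool) : SCV lam u N U ι :=
  Sum.inr (Sum.inr (Sum.inl (i, x, b)))

abbrev rootV (i : Fin lam) : SCV lam u N U ι :=
  treeV i ⟨0, Nat.sub_pos_of_lt (Nat.one_lt_two_pow (Nat.succ_ne_zero u))⟩

def ancV (elem : Fin (2 ^ u) ≃ U) (i : Fin lam) (x : U) (d : ℕ) (hd : d ≤ u) :
    SCV lam u N U ι :=
  treeV i ⟨heapAnc u (elem.symm x) d, heapAnc_lt_tree_size hd (elem.symm x).isLt⟩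

def sibV (elem : Fin (2 ^ u) ≃ U) (i : Fin lam) (x : U) (d : ℕ) (hd : d < u) :
    SCV lam u N U ι :=
  treeV i ⟨heapSib u (elem.symm x) d, heapSib_lt_tree_size hd (elem.symm x).isLt⟩

/-- The `k = u + 1` edge failures after which `ℓ(x_i)` is the only exit from the path between the
root of tree `i` and the leaf `x_i`. -/
noncomputable def failSet (elem : Fin (2 ^ u) ≃ U) (i : Fin lam) (x : U) :
    Finset (SCV lam u N U ι × SCV lam u N U ι) :=
  ((univ : Finset (Fin u)).image fun d : Fin u =>
      (ancV elem i x d d.isLt.le, sibV elem i x d d.isLt)) ∪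
    {(ancV elem i x u le_rfl, elemV i x true)}

lemma ancV_zero (i : Fin lam) (x : U) :
    ancV (N := N) (ι := ι) elem i x 0 (Nat.zero_le u) = rootV i := by
  simp [ancV, heapAnc_zero (elem.symm x).isLt]

lemma card_failSet (i : Fin lam) (x : U) : (failSet (N := N) (ι := ι) elem i x).card ≤ u + 1 :=
  (card_union_le _ _).trans (add_le_add (card_image_le.trans (by simp)) (by simp))

lemma mem_failSet {i : Fin lam} {x : U} {e : SCV lam u N U ι × SCV lam u N U ι} :
    e ∈ failSet elem i x ↔
      (∃ d, ∃ hd : d < u, e = (ancV elem i x d hd.le, sibV elem i x d hd)) ∨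
        e = (ancV elem i x u le_rfl, elemV i x true) := by
  simp only [failSet, mem_union, mem_image, mem_univ, true_and, mem_singleton]
  constructor
  · rintro (⟨d, rfl⟩ | h)
    exacts [Or.inl ⟨d, d.isLt, rfl⟩, Or.inr h]
  · rintro (⟨d, hd, rfl⟩ | h)
    exacts [Or.inl ⟨⟨d, hd⟩, rfl⟩, Or.inr h]

lemma exists_fst_eq_treeV_of_mem_failSet {i : Fin lam} {x : U}
    {e : SCV lam u N U ι × SCV lam u N U ι} (he : e ∈ failSet elem i x) :
    ∃ a, e.1 = treeV i a := by
  rcases mem_failSet.mp he with ⟨d, hd, rfl⟩ | rfl <;> exact ⟨_, rfl⟩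

/-- The `s`–`v_{j₀}` path through tree `i'`: down to the leaf `x_{i'}`, then on through
`ℓ(x_i)` and `y_{i,w}` if `i' = i`, through `r(x_{i'})` and `Z_{i'}` otherwise. -/
def detourV (elem : Fin (2 ^ u) ≃ U) (i : Fin lam) (x : U) (w : ι) (j0 : Fin N) (i' : Fin lam)
    (t : ℕ) : SCV lam u N U ι :=
  if t = 0 then sourceV
  else if h : t ≤ u + 1 then ancV elem i' x (t - 1) (by omega)
  else if t = u + 2 then elemV i' x (decide (i' ≠ i))
  else if t = u + 3 then (if i' = i then yV i w else zV i' 0)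
  else sinkV j0

section Detour

variable {i i' : Fin lam} {x : U} {w : ι} {j0 : Fin N}

lemma detourV_zero : detourV elem i x w j0 i' 0 = sourceV := rfl

lemma detourV_succ {d : ℕ} (hd : d ≤ u) :
    detourV elem i x w j0 i' (d + 1) = ancV elem i' x d hd := by
  simp [detourV, hd]

lemma detourV_add_two :
    detourV elem i x w j0 i' (u + 2) = elemV i' x (decide (i' ≠ i)) := by
  simp [detourV]

lemma detourV_add_three :
    detourV elem i x w j0 i' (u + 3) = if i' = i then yV i w else zV i' 0 := by
  simp [detourV]

lemma detourV_add_four : detourV elem i x w j0 i' (u + 4) = sinkV j0 := by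
  simp [detourV]

lemma detour_edge_not_mem_failSet {t : ℕ} (ht : t < u + 4) :
    (detourV elem i x w j0 i' t, detourV elem i x w j0 i' (t + 1)) ∉ failSet elem i x := by
  intro hF
  rcases t with _ | d
  · obtain ⟨a, ha⟩ := exists_fst_eq_treeV_of_mem_failSet hF
    simp [detourV_zero] at ha
  obtain hd | rfl | rfl | rfl : d < u ∨ d = u ∨ d = u + 1 ∨ d = u + 2 := by omega
  · rw [detourV_succ hd.le, detourV_succ hd] at hF
    rcases mem_failSet.mp hF with ⟨d', hd', he⟩ | he
    · simp only [ancV, sibV, Prod.mk.injEq, Sum.inr.injEq, Sum.inl.injEq, Fin.ext_iff] at he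
      obtain ⟨⟨-, h1⟩, -, h2⟩ := he
      obtain rfl := heapAnc_injOn (elem.symm x).isLt hd.le hd'.le h1
      exact heapAnc_succ_ne_heapSib hd h2
    · simp [ancV] at he
  · rw [detourV_succ le_rfl, detourV_add_two] at hF
    rcases mem_failSet.mp hF with ⟨d', hd', he⟩ | he
    · simp [ancV, sibV] at he
    · simp only [ancV, Prod.mk.injEq, Sum.inr.injEq, Sum.inl.injEq] at he
      simp_all
  · obtain ⟨a, ha⟩ := exists_fst_eq_treeV_of_mem_failSet hF
    simp [detourV_add_two] at ha
  · obtain ⟨a, ha⟩ := exists_fst_eq_treeV_of_mem_failSet hF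
    rw [detourV_add_three] at ha
    split_ifs at ha <;> simp [yV, zV] at ha

def treeOf : SCV lam u N U ι → Option (Fin lam)
  | Sum.inr (Sum.inl (i, _)) => some i
  | Sum.inr (Sum.inr (Sum.inl (i, _, _))) => some i
  | Sum.inr (Sum.inr (Sum.inr (Sum.inl (i, _)))) => some i
  | Sum.inr (Sum.inr (Sum.inr (Sum.inr (Sum.inl (i, _))))) => some i
  | _ => none

lemma treeOf_detourV {t : ℕ} (ht₀ : t ≠ 0) (ht : t < u + 4) :
    treeOf (detourV elem i x w j0 i' t) = some i' := by
  obtain ⟨d, rfl⟩ := Nat.exists_eq_succ_of_ne_zero ht₀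
  obtain hd | rfl | rfl : d ≤ u ∨ d = u + 1 ∨ d = u + 2 := by omega
  · rw [detourV_succ hd]; rfl
  · rw [detourV_add_two]; rfl
  · rw [detourV_add_three]
    split_ifs with hi
    · exact congrArg some hi.symm
    · rfl

lemma treeOf_or_of_mem_walkOf_detourV {e : SCV lam u N U ι × SCV lam u N U ι}
    (he : e ∈ walkOf (detourV elem i x w j0 i') (u + 4)) :
    (treeOf e.1).or (treeOf e.2) = some i' := by
  obtain ⟨t, ht, rfl⟩ := mem_walkOf.mp he
  rcases t with _ | t
  · rw [detourV_zero, treeOf_detourV (Nat.succ_ne_zero 0) (by omega)]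
    rfl
  · rw [treeOf_detourV (Nat.succ_ne_zero t) ht]
    rfl

end Detour

section Graph

variable [Fintype U] [Fintype ι] {Sw : ι → Finset U}

lemma mem_scGraph {e : SCV lam u N U ι × SCV lam u N U ι} :
    e ∈ scGraph lam u N U ι Sw elem ↔ scEdge lam u N U ι Sw elem e := by
  simp [scGraph]

lemma sourceV_rootV_mem_scGraph (i : Fin lam) :
    (sourceV, rootV i) ∈ scGraph lam u N U ι Sw elem := by
  simp [mem_scGraph, scEdge]

lemma outDeg_scGraph_sourceV_le [DecidableEq (SCV lam u N U ι)] :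
    outDeg (scGraph lam u N U ι Sw elem) sourceV ≤ lam := by
  have hsurj : Set.SurjOn
      (fun i : Fin lam => ((sourceV, rootV i) : SCV lam u N U ι × SCV lam u N U ι))
      ↑(univ : Finset (Fin lam))
      ↑((scGraph lam u N U ι Sw elem).filter fun e => e.1 = sourceV) := by
    rintro ⟨a, b⟩ he
    obtain ⟨he, rfl⟩ := mem_filter.mp he
    rcases b with _ | ⟨i, b⟩ | _ <;> simp only [mem_scGraph, scEdge] at he
    exact ⟨i, mem_univ _, by simp [Fin.ext_iff, he]⟩
  simpa [outDeg] using card_le_card_of_surjOn _ hsurj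

section Detour

variable {i i' : Fin lam} {x : U} {w : ι} {j0 : Fin N}

lemma detour_edge_mem_scGraph (hw : x ∈ Sw w) {t : ℕ} (ht : t < u + 4) :
    (detourV elem i x w j0 i' t, detourV elem i x w j0 i' (t + 1)) ∈
      scGraph lam u N U ι Sw elem := by
  rw [mem_scGraph]
  rcases t with _ | d
  · rw [detourV_zero, detourV_succ (Nat.zero_le u), ancV_zero]
    simp [scEdge]
  obtain hd | rfl | rfl | rfl : d < u ∨ d = u ∨ d = u + 1 ∨ d = u + 2 := by omega
  · rw [detourV_succ hd.le, detourV_succ hd]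
    simpa [scEdge, ancV] using heapAnc_succ (j := elem.symm x) hd
  · rw [detourV_succ le_rfl, detourV_add_two]
    simpa [scEdge, ancV] using ⟨elem.symm x, heapAnc_self, elem.apply_symm_apply x⟩
  · rw [detourV_add_two, detourV_add_three]
    by_cases hi : i' = i
    · subst hi; simpa [scEdge, yV] using hw
    · simp [scEdge, zV, hi]
  · rw [detourV_add_three, detourV_add_four]
    split_ifs <;> simp [scEdge, yV, zV, sinkV]

lemma edp_sdiff_failSet [DecidableEq (SCV lam u N U ι)] (hw : x ∈ Sw w) :
    EDP (scGraph lam u N U ι Sw elem \ failSet elem i x) sourceV (sinkV j0) lam := by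
  refine ⟨fun i' => walkOf (detourV elem i x w j0 i') (u + 4), fun i' => ?_,
    fun i₁ i₂ hne e he₁ he₂ => hne ?_⟩
  · rw [← detourV_zero (elem := elem) (i := i) (x := x) (w := w) (j0 := j0) (i' := i'),
      ← detourV_add_four (elem := elem) (i := i) (x := x) (w := w) (i' := i')]
    exact isPath_walkOf (by omega) fun t ht =>
      mem_sdiff.mpr ⟨detour_edge_mem_scGraph hw ht, detour_edge_not_mem_failSet ht⟩
  · exact Option.some_injective _
      ((treeOf_or_of_mem_walkOf_detourV he₁).symm.trans (treeOf_or_of_mem_walkOf_detourV he₂))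

end Detour

/-- Once the edges of `failSet elem i x` have failed, the only edges leaving this set are the
edges `y_{i,W} → v_{j₀}` with `x ∈ W`. -/
def coverTrap (Sw : ι → Finset U) (elem : Fin (2 ^ u) ≃ U) (i : Fin lam) (x : U) (j0 : Fin N) :
    Set (SCV lam u N U ι) :=
  {v | (∃ d, ∃ hd : d ≤ u, v = ancV elem i x d hd) ∨ v = elemV i x false ∨
    (∃ w, x ∈ Sw w ∧ v = yV i w) ∨ ∃ j ≠ j0, v = sinkV j}

section Trap

variable {i : Fin lam} {x : U} {j0 : Fin N}

lemma mem_coverTrap_of_ancV {d : ℕ} {hd : d ≤ u} {v : SCV lam u N U ι}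
    (he : (ancV elem i x d hd, v) ∈ scGraph lam u N U ι Sw elem)
    (hF : (ancV elem i x d hd, v) ∉ failSet elem i x) :
    v ∈ coverTrap Sw elem i x j0 := by
  have hj := (elem.symm x).isLt
  rw [mem_scGraph] at he
  rcases v with _ | ⟨i₂, b⟩ | ⟨i₂, x₂, _ | _⟩ | _ | _ | _ <;>
    simp only [scEdge, ancV, treeV] at he
  · obtain ⟨rfl, hb⟩ := he
    have hdu : d < u := by
      refine lt_of_le_of_ne hd fun hdu => ?_
      subst hdu
      have := b.isLt
      rw [heapAnc_self] at hb
      simp only [pow_succ] at this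
      omega
    rcases eq_heapAnc_succ_or_heapSib hdu hb with hb | hb
    · exact Or.inl ⟨d + 1, hdu, by simp [ancV, ← hb]⟩
    · exact absurd (mem_failSet.mpr (Or.inl ⟨d, hdu, by simp [ancV, sibV, ← hb]⟩)) hF
  all_goals
    obtain ⟨rfl, j', hj', rfl⟩ := he
    obtain ⟨rfl, hj'⟩ := (heapAnc_eq_leaf_iff hd hj).mp hj'
    obtain rfl : j' = elem.symm x := Fin.ext hj'
    rw [Equiv.apply_symm_apply] at hF ⊢
  · exact Or.inr (Or.inl rfl)
  · exact absurd (mem_failSet.mpr (Or.inr rfl)) hF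

lemma exists_eq_yV_sinkV_of_cut {e : SCV lam u N U ι × SCV lam u N U ι}
    (he : e ∈ scGraph lam u N U ι Sw elem) (hF : e ∉ failSet elem i x)
    (h₁ : e.1 ∈ coverTrap Sw elem i x j0) (h₂ : e.2 ∉ coverTrap Sw elem i x j0) :
    ∃ w, x ∈ Sw w ∧ e = (yV i w, sinkV j0) := by
  obtain ⟨a, b⟩ := e
  rw [mem_scGraph] at he
  rcases h₁ with ⟨d, hd, rfl⟩ | rfl | ⟨w, hw, rfl⟩ | ⟨j, -, rfl⟩
  · exact absurd (mem_coverTrap_of_ancV (mem_scGraph.mpr he) hF) h₂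
  · rcases b with _ | _ | _ | ⟨i₂, w⟩ | _ | _ <;> simp only [scEdge] at he
    obtain ⟨rfl, hw⟩ := he
    exact absurd (Or.inr (Or.inr (Or.inl ⟨w, hw, rfl⟩))) h₂
  · rcases b with _ | _ | _ | _ | _ | j <;> simp only [scEdge, yV] at he
    obtain rfl : j = j0 := by_contra fun hj => h₂ (Or.inr (Or.inr (Or.inr ⟨j, hj, rfl⟩)))
    exact ⟨w, hw, rfl⟩
  · rcases b with _ | _ | _ | _ | _ | _ <;> simp only [scEdge, sinkV] at he

lemma exists_yV_sinkV_mem [DecidableEq (SCV lam u N U ι)]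
    {H : Finset (SCV lam u N U ι × SCV lam u N U ι)}
    (hH : IsFTBFP (scGraph lam u N U ι Sw elem) H sourceV lam (u + 1)) (hx : ∃ w, x ∈ Sw w) :
    ∃ w, x ∈ Sw w ∧ (yV i w, sinkV j0) ∈ H := by
  obtain ⟨w, hw⟩ := hx
  have hEDP := hH.edp_sdiff (card_failSet i x) (edp_sdiff_failSet (i := i) (j0 := j0) hw)
  obtain ⟨rest, hp⟩ := hEDP.exists_isPath_cons (sdiff_subset.trans hH.1)
    outDeg_scGraph_sourceV_le (sourceV_rootV_mem_scGraph i) rfl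
  have hroot : rootV i ∈ coverTrap Sw elem i x j0 :=
    Or.inl ⟨0, Nat.zero_le u, (ancV_zero i x).symm⟩
  have hsink : sinkV j0 ∉ coverTrap Sw elem i x j0 := by
    simp [coverTrap, ancV, yV, sinkV]
  obtain ⟨e, he, h₁, h₂⟩ := hp.reach_snd.exists_mem_cut hroot hsink
  obtain ⟨heH, heF⟩ := mem_sdiff.mp he
  obtain ⟨w, hw, rfl⟩ := exists_eq_yV_sinkV_of_cut (hH.1 heH) heF h₁ h₂
  exact ⟨w, hw, heH⟩

end Trap

end Graph

lemma sum_card_filter_yV_mem_le [DecidableEq (SCV lam u N U ι)] [Fintype ι]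
    (H : Finset (SCV lam u N U ι × SCV lam u N U ι)) (j0 : Fin N) :
    ∑ i : Fin lam, (univ.filter fun w => (yV i w, sinkV j0) ∈ H).card ≤
      (inEdges H (sinkV j0)).card := by
  rw [← card_sigma]
  refine card_le_card_of_injOn (fun p => (yV p.1 p.2, sinkV j0)) (fun p hp => ?_) ?_
  · simpa [inEdges] using (mem_filter.mp (mem_sigma.mp hp).2).2
  · rintro ⟨i, w⟩ - ⟨i', w'⟩ - h
    simp only [yV, Prod.mk.injEq, Sum.inr.injEq, Sum.inl.injEq] at h
    obtain ⟨⟨rfl, rfl⟩, -⟩ := h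
    rfl

end SetCover

theorem stmt_16_general (lam u N : ℕ) (hlam : 1 ≤ lam)
    {U ι : Type*} [Fintype U] [DecidableEq U] [Fintype ι] [DecidableEq ι]
    (Sw : ι → Finset U) (elem : Fin (2 ^ u) ≃ U)
    (hcov : ∀ x : U, ∃ w : ι, x ∈ Sw w)
    (H : Finset (SCV lam u N U ι × SCV lam u N U ι))
    (hH : IsFTBFP (scGraph lam u N U ι Sw elem) H (Sum.inl ()) lam (u + 1))
    (j0 : Fin N) :
    ∃ i : Fin lam, ∃ Scov : Finset ι,
      (∀ w : ι, w ∈ Scov ↔ (yV i w, sinkV j0) ∈ H) ∧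
      (∀ x : U, ∃ w ∈ Scov, x ∈ Sw w) ∧
      lam * Scov.card ≤ (inEdges H (sinkV j0)).card := by
  set S : Fin lam → Finset ι := fun i => univ.filter fun w => (yV i w, sinkV j0) ∈ H
  obtain ⟨i, -, hmin⟩ := exists_min_image univ (fun i => (S i).card) ⟨⟨0, hlam⟩, mem_univ _⟩
  refine ⟨i, S i, fun w => by simp [S], fun x => ?_, ?_⟩
  · obtain ⟨w, hw, hwH⟩ := SetCover.exists_yV_sinkV_mem (i := i) (j0 := j0) hH (hcov x)
    exact ⟨w, by simp [S, hwH], hw⟩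
  · calc lam * (S i).card = ∑ _i' : Fin lam, (S i).card := by simp
      _ ≤ ∑ i', (S i').card := sum_le_sum fun i' _ => hmin i' (mem_univ _)
      _ ≤ (inEdges H (sinkV j0)).card := SetCover.sum_card_filter_yV_mem_le H j0

/-- from any `(lam, u+1)`-FT-BFP `H` of the set-cover reduction graph,
taking a sink `v_{j₀}` of minimum in-degree in `H` and
`S_i = {W : (y_{i,W}, v_{j₀}) ∈ E(H)}`, some `S_i` is a valid set cover of `U` of
size at most `|in(v_{j₀}, H)| / lam`. -/
theorem stmt_16 (lam u N : ℕ) (hlam : 1 ≤ lam) (hN : 1 ≤ N)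
    {U ι : Type*} [Fintype U] [DecidableEq U] [Fintype ι] [DecidableEq ι]
    (Sw : ι → Finset U) (elem : Fin (2 ^ u) ≃ U)
    (hcov : ∀ x : U, ∃ w : ι, x ∈ Sw w)
    (H : Finset (SCV lam u N U ι × SCV lam u N U ι))
    (hH : IsFTBFP (scGraph lam u N U ι Sw elem) H (Sum.inl ()) lam (u + 1))
    (j0 : Fin N)
    (hj0 : ∀ j : Fin N, (inEdges H (sinkV j0)).card ≤ (inEdges H (sinkV j)).card) :
    ∃ i : Fin lam, ∃ Scov : Finset ι,
      (∀ w : ι, w ∈ Scov ↔ (yV i w, sinkV j0) ∈ H) ∧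
      (∀ x : U, ∃ w ∈ Scov, x ∈ Sw w) ∧
      lam * Scov.card ≤ (inEdges H (sinkV j0)).card :=
  stmt_16_general lam u N hlam Sw elem hcov H hH j0
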